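/- Let n ≥ 1, let R : ℝ → Matrix (Fin n) (Fin n) ℝ be continuous with R(t) symmetric for every t, let α ≥ 1 and t > 0. Let U be a Lagrangian Jacobi solution along R with U(0) = 1 such that U(u) is invertible and ‖U(u) x‖ ≥ ‖x‖ / α for all u ∈ [0, t] and all x ∈ ℝⁿ, and let S_t be the Jacobi solution along R with S_t(0) = 1 and S_t(t) = 0. Then for every x ∈ ℝⁿ, ⟨(U'(0) − S_t'(0)) x, x⟩ ≥ ⟨x, x⟩ / (α² t). -/

import Mathlib

open Matrix MeasureTheory

attribute [local instance] Matrix.normedAddCommGroup Matrix.normedSpace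

/-- A Jacobi solution along `R`: a twice continuously differentiable matrix-valued
map `Y` satisfying `Y'' + R Y = 0`. -/
def IsJacobi {n : ℕ} (R Y : ℝ → Matrix (Fin n) (Fin n) ℝ) : Prop :=
  ContDiff ℝ 2 Y ∧ ∀ t : ℝ, deriv (deriv Y) t + R t * Y t = 0

/-- A Lagrangian (self-conjugate) solution: the Wronskian `W(Y,Y)` vanishes. -/
def IsLagrangian {n : ℕ} (Y : ℝ → Matrix (Fin n) (Fin n) ℝ) : Prop :=
  ∀ t : ℝ, (deriv Y t)ᵀ * Y t = (Y t)ᵀ * deriv Y t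

/-- The Euclidean norm on `ℝⁿ`. -/
noncomputable def euclNorm {n : ℕ} (x : Fin n → ℝ) : ℝ :=
  Real.sqrt (x ⬝ᵥ x)

/-!
Let `N = U⁻¹` and `D = U'(0) - S_t'(0)`. The Wronskian `U'ᵀ S_t - Uᵀ S_t'` is constant, equal to
`D` because `U'(0)` is symmetric, and since `U' U⁻¹` is symmetric (`U` is Lagrangian) it gives
`(N S_t)' = -N Nᵀ D`. Integrating over `[0, t]` yields `∫₀ᵗ (Nᵀ D x) ⬝ (Nᵀ y) = x ⬝ y`, i.e. `D` is
the inverse of the Gram matrix `∫₀ᵗ N Nᵀ`, and `∫₀ᵗ N Nᵀ ≤ α² t` because `‖Nᵀ‖ = ‖N‖ ≤ α`.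
-/

section MatrixCalculus

variable {m : Type*} [Fintype m] {f g : ℝ → Matrix m m ℝ} {f' g' : Matrix m m ℝ} {u : ℝ}

theorem HasDerivAt.matrix_mul (hf : HasDerivAt f f' u) (hg : HasDerivAt g g' u) :
    HasDerivAt (fun v => f v * g v) (f' * g u + f u * g') u := by
  classical
  open scoped Norms.Operator in exact hf.mul hg

theorem HasDerivAt.matrix_transpose (hf : HasDerivAt f f' u) :
    HasDerivAt (fun v => (f v)ᵀ) f'ᵀ u :=
  (transposeLinearEquiv m m ℝ ℝ).toContinuousLinearEquiv.hasFDerivAt.comp_hasDerivAt u hf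

theorem HasDerivAt.matrix_inv [DecidableEq m] (hf : HasDerivAt f f' u) (hu : IsUnit (f u)) :
    HasDerivAt (fun v => (f v)⁻¹) (-((f u)⁻¹ * f' * (f u)⁻¹)) u := by
  open scoped Norms.Operator in
  obtain ⟨w, hw⟩ := hu
  have hinv := hasFDerivAt_ringInverse (𝕜 := ℝ) w
  rw [hw] at hinv
  have hw_inv : ((w⁻¹ : (Matrix m m ℝ)ˣ) : Matrix m m ℝ) = (f u)⁻¹ := by
    rw [← hw, coe_units_inv]
  have h := (hinv.comp_hasDerivAt u hf).congr_deriv (g' := -((f u)⁻¹ * f' * (f u)⁻¹))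
    (by simp [hw_inv])
  simp only [Function.comp_def, ← nonsing_inv_eq_ringInverse] at h
  exact h

theorem HasDerivAt.mulVec_dotProduct (hf : HasDerivAt f f' u) (x y : m → ℝ) :
    HasDerivAt (fun v => (f v *ᵥ x) ⬝ᵥ y) ((f' *ᵥ x) ⬝ᵥ y) u := by
  simp only [dotProduct, mulVec]
  exact HasDerivAt.fun_sum fun i _ => (HasDerivAt.fun_sum fun j _ =>
    ((hasDerivAt_pi.1 (hasDerivAt_pi.1 hf i) j).mul_const (x j))).mul_const (y i)

theorem Differentiable.continuousOn_matrix_inv [DecidableEq m] {s : Set ℝ}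
    (hf : Differentiable ℝ f) (hs : ∀ u ∈ s, IsUnit (f u)) :
    ContinuousOn (fun v => (f v)⁻¹) s := fun u hu =>
  ((hf u).hasDerivAt.matrix_inv (hs u hu)).continuousAt.continuousWithinAt

end MatrixCalculus

section DotProduct

variable {m : Type*} [Fintype m]

theorem dotProduct_self_nonneg (v : m → ℝ) : 0 ≤ v ⬝ᵥ v :=
  Fintype.sum_nonneg fun i => mul_self_nonneg (v i)

theorem dotProduct_transpose_mulVec_self_le {A : Matrix m m ℝ} {c : ℝ} (hc : 0 ≤ c)
    (hA : ∀ z, (A *ᵥ z) ⬝ᵥ (A *ᵥ z) ≤ c * (z ⬝ᵥ z)) (x : m → ℝ) :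
    (Aᵀ *ᵥ x) ⬝ᵥ (Aᵀ *ᵥ x) ≤ c * (x ⬝ᵥ x) := by
  set w := Aᵀ *ᵥ x
  have hw : w ⬝ᵥ w = (A *ᵥ w) ⬝ᵥ x := by
    rw [dotProduct_transpose_mulVec, dotProduct_comm]
  have hcs : ((A *ᵥ w) ⬝ᵥ x) ^ 2 ≤ ((A *ᵥ w) ⬝ᵥ (A *ᵥ w)) * (x ⬝ᵥ x) := by
    simpa [dotProduct, sq] using Finset.sum_mul_sq_le_sq_mul_sq Finset.univ (A *ᵥ w) x
  rcases (dotProduct_self_nonneg w).eq_or_lt with h0 | hpos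
  · rw [← h0]; exact mul_nonneg hc (dotProduct_self_nonneg x)
  refine le_of_mul_le_mul_left ?_ hpos
  calc w ⬝ᵥ w * (w ⬝ᵥ w) = ((A *ᵥ w) ⬝ᵥ x) ^ 2 := by rw [sq, ← hw]
    _ ≤ ((A *ᵥ w) ⬝ᵥ (A *ᵥ w)) * (x ⬝ᵥ x) := hcs
    _ ≤ c * (w ⬝ᵥ w) * (x ⬝ᵥ x) := mul_le_mul_of_nonneg_right (hA w) (dotProduct_self_nonneg x)
    _ = w ⬝ᵥ w * (c * (x ⬝ᵥ x)) := by ring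

theorem two_mul_dotProduct_le (p q : m → ℝ) {s : ℝ} (hs : 0 < s) :
    2 * (p ⬝ᵥ q) ≤ s * (p ⬝ᵥ p) + s⁻¹ * (q ⬝ᵥ q) := by
  simp only [dotProduct, Finset.mul_sum, ← Finset.sum_add_distrib]
  refine Finset.sum_le_sum fun i _ => ?_
  have h : 0 ≤ (s * p i - q i) ^ 2 * s⁻¹ := by positivity
  have : s * s⁻¹ = 1 := mul_inv_cancel₀ hs.ne'
  nlinarith

/-- Cauchy–Schwarz for the form `(v, w) ↦ ∫₀ᵗ (F u v) ⬝ (F u w)`, in the weighted AM–GM form with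
weight `c t`. -/
theorem dotProduct_self_le_of_integral {F : ℝ → Matrix m m ℝ} {D : Matrix m m ℝ} {x : m → ℝ}
    {t c : ℝ} (ht : 0 < t) (hc : 0 < c) (hF : ContinuousOn F (Set.Icc 0 t))
    (hgram : ∀ y, ∫ u in (0 : ℝ)..t, (F u *ᵥ (D *ᵥ x)) ⬝ᵥ (F u *ᵥ y) = x ⬝ᵥ y)
    (hbound : ∀ u ∈ Set.Icc 0 t, (F u *ᵥ x) ⬝ᵥ (F u *ᵥ x) ≤ c * (x ⬝ᵥ x)) :
    x ⬝ᵥ x ≤ c * t * ((D *ᵥ x) ⬝ᵥ x) := by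
  rw [← Set.uIcc_of_le ht.le] at hF
  have hint : ∀ v w, IntervalIntegrable (fun u => (F u *ᵥ v) ⬝ᵥ (F u *ᵥ w)) volume 0 t :=
    fun v w => ContinuousOn.intervalIntegrable (by fun_prop)
  have hqq : ∫ u in (0 : ℝ)..t, (F u *ᵥ x) ⬝ᵥ (F u *ᵥ x) ≤ c * (t * (x ⬝ᵥ x)) := by
    simpa using intervalIntegral.integral_mono_on ht.le (hint x x) intervalIntegrable_const hbound
  have hamgm := intervalIntegral.integral_mono_on ht.le ((hint _ x).const_mul 2)
    (((hint _ _).const_mul (c * t)).add ((hint x x).const_mul (c * t)⁻¹))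
    fun u _ => two_mul_dotProduct_le (F u *ᵥ (D *ᵥ x)) (F u *ᵥ x) (by positivity)
  rw [intervalIntegral.integral_add ((hint _ _).const_mul _) ((hint x x).const_mul _)] at hamgm
  simp only [intervalIntegral.integral_const_mul, hgram] at hamgm
  have hcancel : (c * t)⁻¹ * (c * (t * (x ⬝ᵥ x))) = x ⬝ᵥ x := by field_simp
  rw [dotProduct_comm (D *ᵥ x) x]
  linarith [mul_le_mul_of_nonneg_left hqq (inv_nonneg.mpr (by positivity : (0 : ℝ) ≤ c * t))]

end DotProduct

section Jacobi

variable {n : ℕ}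

noncomputable def wronskian (Y Z : ℝ → Matrix (Fin n) (Fin n) ℝ) (u : ℝ) :
    Matrix (Fin n) (Fin n) ℝ :=
  (deriv Y u)ᵀ * Z u - (Y u)ᵀ * deriv Z u

namespace IsJacobi

variable {R Y Z : ℝ → Matrix (Fin n) (Fin n) ℝ}

theorem differentiable (hY : IsJacobi R Y) : Differentiable ℝ Y :=
  hY.1.differentiable (by norm_num)

theorem hasDerivAt (hY : IsJacobi R Y) (u : ℝ) : HasDerivAt Y (deriv Y u) u :=
  (hY.differentiable u).hasDerivAt

theorem hasDerivAt_deriv (hY : IsJacobi R Y) (u : ℝ) : HasDerivAt (deriv Y) (-(R u * Y u)) u :=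
  (hY.1.differentiable_deriv_two u).hasDerivAt.congr_deriv (eq_neg_of_add_eq_zero_left (hY.2 u))

theorem hasDerivAt_wronskian (hR : ∀ u, (R u)ᵀ = R u) (hY : IsJacobi R Y) (hZ : IsJacobi R Z)
    (u : ℝ) : HasDerivAt (wronskian Y Z) 0 u := by
  refine (((hY.hasDerivAt_deriv u).matrix_transpose.matrix_mul (hZ.hasDerivAt u)).sub
    ((hY.hasDerivAt u).matrix_transpose.matrix_mul (hZ.hasDerivAt_deriv u))).congr_deriv ?_
  rw [transpose_neg, transpose_mul, hR u]
  noncomm_ring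

theorem wronskian_eq (hR : ∀ u, (R u)ᵀ = R u) (hY : IsJacobi R Y) (hZ : IsJacobi R Z) (u : ℝ) :
    wronskian Y Z u = wronskian Y Z 0 :=
  is_const_of_deriv_eq_zero (fun v => (hY.hasDerivAt_wronskian hR hZ v).differentiableAt)
    (fun v => (hY.hasDerivAt_wronskian hR hZ v).deriv) u 0

end IsJacobi

theorem IsLagrangian.isSymm_deriv_mul_inv {U : ℝ → Matrix (Fin n) (Fin n) ℝ}
    (hU : IsLagrangian U) {u : ℝ} (hu : IsUnit (U u)) : (deriv U u * (U u)⁻¹).IsSymm := by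
  have hdet := (isUnit_iff_isUnit_det _).mp hu
  calc (deriv U u * (U u)⁻¹)ᵀ = ((U u)⁻¹)ᵀ * ((deriv U u)ᵀ * U u) * (U u)⁻¹ := by
        rw [transpose_mul, Matrix.mul_assoc, Matrix.mul_assoc, mul_nonsing_inv _ hdet,
          Matrix.mul_one]
    _ = ((U u)⁻¹)ᵀ * (U u)ᵀ * deriv U u * (U u)⁻¹ := by rw [hU u]; noncomm_ring
    _ = deriv U u * (U u)⁻¹ := by
        rw [← transpose_mul, mul_nonsing_inv _ hdet, transpose_one, Matrix.one_mul]

theorem hasDerivAt_inv_mul {U S : ℝ → Matrix (Fin n) (Fin n) ℝ} {U' S' : Matrix (Fin n) (Fin n) ℝ}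
    {u : ℝ} (hU : HasDerivAt U U' u) (hS : HasDerivAt S S' u) (hu : IsUnit (U u))
    (hsymm : (U' * (U u)⁻¹).IsSymm) :
    HasDerivAt (fun v => (U v)⁻¹ * S v)
      (-((U u)⁻¹ * ((U u)⁻¹)ᵀ * (U'ᵀ * S u - (U u)ᵀ * S'))) u := by
  have hdet := (isUnit_iff_isUnit_det _).mp hu
  have h₁ : ((U u)⁻¹)ᵀ * U'ᵀ = U' * (U u)⁻¹ := by rw [← transpose_mul]; exact hsymm
  have h₂ : ((U u)⁻¹)ᵀ * (U u)ᵀ = 1 := by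
    rw [← transpose_mul, mul_nonsing_inv _ hdet, transpose_one]
  refine ((hU.matrix_inv hu).matrix_mul hS).congr_deriv ?_
  calc -((U u)⁻¹ * U' * (U u)⁻¹) * S u + (U u)⁻¹ * S'
      = -((U u)⁻¹ * (U' * (U u)⁻¹) * S u) + (U u)⁻¹ * 1 * S' := by noncomm_ring
    _ = _ := by rw [← h₁, ← h₂]; noncomm_ring

theorem IsJacobi.integral_gram_eq {R U S : ℝ → Matrix (Fin n) (Fin n) ℝ} {t : ℝ} (ht : 0 ≤ t)
    (hR : ∀ u, (R u)ᵀ = R u) (hU : IsJacobi R U) (hS : IsJacobi R S) (hUL : IsLagrangian U)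
    (hunit : ∀ u ∈ Set.Icc 0 t, IsUnit (U u)) (hU0 : U 0 = 1) (hS0 : S 0 = 1) (hSt : S t = 0)
    (x y : Fin n → ℝ) :
    ∫ u in (0 : ℝ)..t, (((U u)⁻¹)ᵀ *ᵥ (wronskian U S 0 *ᵥ x)) ⬝ᵥ (((U u)⁻¹)ᵀ *ᵥ y) = x ⬝ᵥ y := by
  have hderiv : ∀ u ∈ Set.uIcc 0 t, HasDerivAt (fun v => (((U v)⁻¹ * S v) *ᵥ x) ⬝ᵥ y)
      (-((((U u)⁻¹)ᵀ *ᵥ (wronskian U S 0 *ᵥ x)) ⬝ᵥ (((U u)⁻¹)ᵀ *ᵥ y))) u := by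
    intro u hu
    rw [Set.uIcc_of_le ht] at hu
    refine ((hasDerivAt_inv_mul (hU.hasDerivAt u) (hS.hasDerivAt u) (hunit u hu)
      (hUL.isSymm_deriv_mul_inv (hunit u hu))).mulVec_dotProduct x y).congr_deriv ?_
    rw [← wronskian, hU.wronskian_eq hR hS u, neg_mulVec, neg_dotProduct, ← mulVec_mulVec,
      ← mulVec_mulVec, dotProduct_comm, ← dotProduct_transpose_mulVec, dotProduct_comm]
  have hint : IntervalIntegrable (fun u => (((U u)⁻¹)ᵀ *ᵥ (wronskian U S 0 *ᵥ x)) ⬝ᵥ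
      (((U u)⁻¹)ᵀ *ᵥ y)) volume 0 t := by
    refine ContinuousOn.intervalIntegrable ?_
    have hN := hU.differentiable.continuousOn_matrix_inv (Set.uIcc_of_le ht ▸ hunit)
    fun_prop
  have hFTC := intervalIntegral.integral_eq_sub_of_hasDerivAt hderiv hint.neg
  simp only [intervalIntegral.integral_neg, hU0, hS0, hSt, inv_one, Matrix.mul_zero,
    Matrix.mul_one, zero_mulVec, zero_dotProduct, one_mulVec, zero_sub] at hFTC
  exact neg_inj.mp hFTC

theorem dotProduct_self_inv_mulVec_le {A : Matrix (Fin n) (Fin n) ℝ} (hA : IsUnit A) {α : ℝ}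
    (hα : 0 < α) (h : ∀ z, euclNorm z / α ≤ euclNorm (A *ᵥ z)) (z : Fin n → ℝ) :
    (A⁻¹ *ᵥ z) ⬝ᵥ (A⁻¹ *ᵥ z) ≤ α ^ 2 * (z ⬝ᵥ z) := by
  have hz := h (A⁻¹ *ᵥ z)
  rw [mulVec_mulVec, mul_nonsing_inv _ ((isUnit_iff_isUnit_det _).mp hA), one_mulVec,
    div_le_iff₀ hα, euclNorm, euclNorm, mul_comm, ← Real.sqrt_sq hα.le,
    ← Real.sqrt_mul (sq_nonneg α)] at hz
  exact (Real.sqrt_le_sqrt_iff (mul_nonneg (sq_nonneg α) (dotProduct_self_nonneg z))).mp hz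

end Jacobi

theorem lower_bound_deriv_diff_general {n : ℕ}
    (R : ℝ → Matrix (Fin n) (Fin n) ℝ)
    (hRsym : ∀ t : ℝ, (R t)ᵀ = R t)
    (α t : ℝ) (hα : 1 ≤ α) (ht : 0 < t)
    (U : ℝ → Matrix (Fin n) (Fin n) ℝ)
    (hU : IsJacobi R U) (hUL : IsLagrangian U) (hU0 : U 0 = 1)
    (hUinv : ∀ u ∈ Set.Icc (0 : ℝ) t, IsUnit (U u))
    (hUlow : ∀ u ∈ Set.Icc (0 : ℝ) t, ∀ x : Fin n → ℝ,
      euclNorm x / α ≤ euclNorm (U u *ᵥ x))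
    (St : ℝ → Matrix (Fin n) (Fin n) ℝ)
    (hSt : IsJacobi R St) (hSt0 : St 0 = 1) (hStt : St t = 0) :
    ∀ x : Fin n → ℝ,
      (x ⬝ᵥ x) / (α ^ 2 * t) ≤ ((deriv U 0 - deriv St 0) *ᵥ x) ⬝ᵥ x := by
  intro x
  have hα0 : 0 < α := by linarith
  have hW : wronskian U St 0 = deriv U 0 - deriv St 0 := by
    have hU'0 : (deriv U 0)ᵀ = deriv U 0 := by simpa [hU0] using hUL 0
    rw [wronskian, hU0, hSt0, hU'0, transpose_one, Matrix.mul_one, Matrix.one_mul]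
  have hgram := hU.integral_gram_eq ht.le hRsym hSt hUL hUinv hU0 hSt0 hStt x
  rw [hW] at hgram
  have hbound : ∀ u ∈ Set.Icc 0 t,
      (((U u)⁻¹)ᵀ *ᵥ x) ⬝ᵥ (((U u)⁻¹)ᵀ *ᵥ x) ≤ α ^ 2 * (x ⬝ᵥ x) := fun u hu =>
    dotProduct_transpose_mulVec_self_le (sq_nonneg α)
      (dotProduct_self_inv_mulVec_le (hUinv u hu) hα0 (hUlow u hu)) x
  have hN : ContinuousOn (fun u => ((U u)⁻¹)ᵀ) (Set.Icc 0 t) := by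
    have := hU.differentiable.continuousOn_matrix_inv hUinv
    fun_prop
  rw [div_le_iff₀ (by positivity)]
  linarith [dotProduct_self_le_of_integral ht (by positivity) hN hgram hbound]

/-- If `‖U(u)x‖ ≥ ‖x‖/α` on `[0, t]`, then
`⟨(U'(0) − S_t'(0))x, x⟩ ≥ ⟨x, x⟩/(α² t)`. -/
theorem lower_bound_deriv_diff {n : ℕ} (hn : 1 ≤ n)
    (R : ℝ → Matrix (Fin n) (Fin n) ℝ) (hRc : Continuous R)
    (hRsym : ∀ t : ℝ, (R t)ᵀ = R t)
    (α t : ℝ) (hα : 1 ≤ α) (ht : 0 < t)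
    (U : ℝ → Matrix (Fin n) (Fin n) ℝ)
    (hU : IsJacobi R U) (hUL : IsLagrangian U) (hU0 : U 0 = 1)
    (hUinv : ∀ u ∈ Set.Icc (0 : ℝ) t, IsUnit (U u))
    (hUlow : ∀ u ∈ Set.Icc (0 : ℝ) t, ∀ x : Fin n → ℝ,
      euclNorm x / α ≤ euclNorm (U u *ᵥ x))
    (St : ℝ → Matrix (Fin n) (Fin n) ℝ)
    (hSt : IsJacobi R St) (hSt0 : St 0 = 1) (hStt : St t = 0) :
    ∀ x : Fin n → ℝ,
      (x ⬝ᵥ x) / (α ^ 2 * t) ≤ ((deriv U 0 - deriv St 0) *ᵥ x) ⬝ᵥ x :=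
  lower_bound_deriv_diff_general R hRsym α t hα ht U hU hUL hU0 hUinv hUlow St hSt hSt0 hStt
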